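/- arXiv:1601.06383 — 2 statements merged into one kernel-verified Lean document; each statement's English description precedes it below -/
import Mathlib

section
/- Let K ≥ 3 and t = KM/N with N = 2. For any reals x_0, ..., x_K ≥ 0 satisfying x_0 + x_1 + ... + x_K = 2 and ∑_{i=1}^{K} i·x_i = KM, and any integer q ∈ [1, K], the quantity n = ∑_{i=0}^{K} [(K-i)(2K-i-2)/(2K(K-1))]·x_i satisfies n ≥ (2K² - 2K - q² + q)/(K(K-1)) + M·(2q - 3K + 1)/(2(K-1)). -/
/-!
Dual certificate: writing the coefficient of `x i` as
`((i - q) * (i - q + 1) + (2K² - 2K - q² + q) + (2q - 3K + 1) i) / (2K(K - 1))`,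
the first summand is a product of consecutive integers, hence nonnegative. Dropping it
leaves an affine function of `i`, whose `x`-weighted sum is fixed by the two constraints.
-/

open Finset

theorem Int.mul_add_one_nonneg (m : ℤ) : 0 ≤ m * (m + 1) := by
  rcases le_or_gt 0 m with hm | hm <;> nlinarith

/-- Weak duality for `min ∑ c i * x i` subject to `x ≥ 0` and prescribed `∑ x i`, `∑ g i * x i`. -/
theorem Finset.affine_combination_le_sum_mul {ι : Type*} (s : Finset ι) {x c g : ι → ℝ}
    {α β : ℝ} (hx : ∀ i ∈ s, 0 ≤ x i) (hc : ∀ i ∈ s, α + β * g i ≤ c i) :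
    α * ∑ i ∈ s, x i + β * ∑ i ∈ s, g i * x i ≤ ∑ i ∈ s, c i * x i := by
  rw [mul_sum, mul_sum, ← sum_add_distrib]
  refine sum_le_sum fun i hi => ?_
  calc α * x i + β * (g i * x i) = (α + β * g i) * x i := by ring
    _ ≤ c i * x i := mul_le_mul_of_nonneg_right (hc i hi) (hx i hi)

theorem load_coefficient_ge_affine {K : ℝ} (hK : 1 < K) (i q : ℕ) :
    (2 * K ^ 2 - 2 * K - (q : ℝ) ^ 2 + q) / (2 * K * (K - 1))
        + (2 * (q : ℝ) - 3 * K + 1) / (2 * K * (K - 1)) * i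
      ≤ (K - i) * (2 * K - i - 2) / (2 * K * (K - 1)) := by
  have hconsec : (0 : ℝ) ≤ ((i : ℝ) - q) * ((i : ℝ) - q + 1) := by
    exact_mod_cast Int.mul_add_one_nonneg ((i : ℤ) - q)
  rw [div_mul_eq_mul_div, ← add_div]
  gcongr
  linear_combination hconsec

theorem lp_outer_bound_general (K : ℕ) (hK : 3 ≤ K) (x : ℕ → ℝ) (M : ℝ)
    (hx : ∀ i, 0 ≤ x i)
    (hfile : ∑ i ∈ Finset.range (K + 1), x i = 2)
    (hcache : ∑ i ∈ Finset.range (K + 1), (i : ℝ) * x i = K * M)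
    (q : ℕ) :
    ∑ i ∈ Finset.range (K + 1),
        (((K : ℝ) - i) * (2 * K - i - 2) / (2 * K * ((K : ℝ) - 1))) * x i
      ≥ (2 * (K : ℝ)^2 - 2 * K - (q : ℝ)^2 + q) / ((K : ℝ) * ((K : ℝ) - 1))
        + M * (2 * (q : ℝ) - 3 * K + 1) / (2 * ((K : ℝ) - 1)) := by
  have hK1 : (1 : ℝ) < K := by exact_mod_cast (by omega : 1 < K)
  have hdual := (range (K + 1)).affine_combination_le_sum_mul (g := fun i => (i : ℝ))
    (fun i _ => hx i) (fun i _ => load_coefficient_ge_affine hK1 i q)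
  rw [hfile, hcache] at hdual
  refine le_of_eq_of_le ?_ hdual
  have : (K : ℝ) - 1 ≠ 0 := by linarith
  field_simp

/-- LP outer bound for the worst-case load under uncoded placement with `N = 2`
files and `K` users. -/
theorem lp_outer_bound (K : ℕ) (hK : 3 ≤ K) (x : ℕ → ℝ) (M : ℝ)
    (hx : ∀ i, 0 ≤ x i)
    (hfile : ∑ i ∈ Finset.range (K + 1), x i = 2)
    (hcache : ∑ i ∈ Finset.range (K + 1), (i : ℝ) * x i = K * M)
    (q : ℕ) (hq1 : 1 ≤ q) (hqK : q ≤ K) :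
    ∑ i ∈ Finset.range (K + 1),
        (((K : ℝ) - i) * (2 * K - i - 2) / (2 * K * ((K : ℝ) - 1))) * x i
      ≥ (2 * (K : ℝ)^2 - 2 * K - (q : ℝ)^2 + q) / ((K : ℝ) * ((K : ℝ) - 1))
        + M * (2 * (q : ℝ) - 3 * K + 1) / (2 * ((K : ℝ) - 1)) :=
  lp_outer_bound_general K hK x M hx hfile hcache q
end

section
/- For integers K ≥ 2 and 0 ≤ t ≤ K, with N = 2 and M = 2t/K, the achievable load R_co(M) = N - M - M(N-1)K(N-M)/(N²(K-1)) equals 2(K-t)/K - t(K-t)/(K(K-1)), which matches the outer bound at the corner point; hence the proposed scheme is optimal under uncoded placement for N = 2. -/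
theorem Rco_matches_outer_bound_general (K t : ℕ) (hK : 2 < K) :
    (2 : ℝ) - (2 * (t : ℝ) / K)
        - (2 * (t : ℝ) / K) * ((2 : ℝ) - 1) * K * ((2 : ℝ) - 2 * (t : ℝ) / K)
          / ((2 : ℝ)^2 * ((K : ℝ) - 1))
      = 2 * ((K : ℝ) - t) / K - (t : ℝ) * ((K : ℝ) - t) / ((K : ℝ) * ((K : ℝ) - 1)) := by
  have hK' : (2 : ℝ) < K := by exact_mod_cast hK
  have hK0 : (K : ℝ) ≠ 0 := by positivity
  have hK1 : (K : ℝ) - 1 ≠ 0 := by linarith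
  field_simp
  ring

/-- At the corner point `M = 2t/K` (with `N = 2`), the achievable load `R_co(M)`
equals the outer-bound value `2(K-t)/K - t(K-t)/(K(K-1))`. -/
theorem Rco_matches_outer_bound (K t : ℕ) (hK : 2 < K) (ht : t ≤ K) :
    (2 : ℝ) - (2 * (t : ℝ) / K)
        - (2 * (t : ℝ) / K) * ((2 : ℝ) - 1) * K * ((2 : ℝ) - 2 * (t : ℝ) / K)
          / ((2 : ℝ)^2 * ((K : ℝ) - 1))
      = 2 * ((K : ℝ) - t) / K - (t : ℝ) * ((K : ℝ) - t) / ((K : ℝ) * ((K : ℝ) - 1)) :=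
  Rco_matches_outer_bound_general K t hK
end
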